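/- Let m, n, t, x be positive integers with gcd(m, n) = 1, m = ∏_{i=1}^{s} p_i^{k_i}, and suppose (σ_x(mn) + σ_x(m)·t)/(mn)^x is in lowest terms with I(x, p_i·m) > (σ_x(mn) + σ_x(m)·t)/(mn)^x for all 1 ≤ i ≤ s. If (σ_x(mn) + σ_x(m)·t)/(mn)^x = I(x, a) for some positive integer a, then (σ_x(n) + t)/n^x = I(x, b) for some positive integer b. -/

import Mathlib

open Finset Nat

/-- Sum of x-th powers of divisors. -/
def sigmaX (x n : ℕ) : ℕ := ∑ d ∈ n.divisors, d ^ x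

/-- The x-th abundancy index as a rational number. -/
def Iq (x n : ℕ) : ℚ := (sigmaX x n : ℚ) / (n : ℚ) ^ x

/-!
With `N = σ_x(mn) + σ_x(m) t`, the fraction `N / (mn)^x` is in lowest terms and equals
`σ_x(a) / a^x`, so its denominator `(mn)^x` divides `a^x`, whence `mn ∣ a`; write `a = m b`.
If a prime `p_i ∣ m` divided `b`, then `p_i m ∣ a`, and monotonicity of the abundancy index
along divisibility would give `I(p_i m) ≤ I(a)`, contradicting the hypothesis. Hence
`gcd(m, b) = 1`, so `I(a) = I(m) I(b)`, while `N / (mn)^x = I(m) (σ_x(n) + t) / n^x` by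
multiplicativity; cancelling `I(m)` gives the claim.
-/

lemma sigmaX_eq_sigma (x n : ℕ) : sigmaX x n = ArithmeticFunction.sigma x n := by
  simp [sigmaX, ArithmeticFunction.sigma_apply]

lemma sigmaX_mul_of_coprime (x : ℕ) {m n : ℕ} (h : m.Coprime n) :
    sigmaX x (m * n) = sigmaX x m * sigmaX x n := by
  simp only [sigmaX_eq_sigma]
  exact ArithmeticFunction.isMultiplicative_sigma.map_mul_of_coprime h

lemma sigmaX_pos (x : ℕ) {n : ℕ} (hn : 0 < n) : 0 < sigmaX x n :=
  Finset.sum_pos (fun _ hd => pow_pos (Nat.pos_of_mem_divisors hd) x)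
    (Nat.nonempty_divisors.mpr hn.ne')

lemma Iq_pos (x : ℕ) {n : ℕ} (hn : 0 < n) : 0 < Iq x n := by
  have := sigmaX_pos x hn
  unfold Iq
  positivity

lemma Iq_mul_of_coprime (x : ℕ) {m n : ℕ} (h : m.Coprime n) :
    Iq x (m * n) = Iq x m * Iq x n := by
  simp only [Iq, sigmaX_mul_of_coprime x h, Nat.cast_mul, mul_pow, mul_div_mul_comm]

lemma Iq_eq_sum_inv_pow (x n : ℕ) :
    Iq x n = ∑ d ∈ n.divisors, ((d : ℚ) ^ x)⁻¹ := by
  rw [← Nat.sum_div_divisors n fun d => ((d : ℚ) ^ x)⁻¹, Iq, sigmaX, Nat.cast_sum, sum_div]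
  refine sum_congr rfl fun d hd => ?_
  have hd0 : (d : ℚ) ≠ 0 := by exact_mod_cast (Nat.pos_of_mem_divisors hd).ne'
  rw [Nat.cast_div (Nat.dvd_of_mem_divisors hd) hd0, div_pow, inv_div, Nat.cast_pow]

lemma Iq_le_of_dvd (x : ℕ) {d a : ℕ} (hd : d ∣ a) (ha : 0 < a) : Iq x d ≤ Iq x a := by
  rw [Iq_eq_sum_inv_pow, Iq_eq_sum_inv_pow]
  exact sum_le_sum_of_subset_of_nonneg (Nat.divisors_subset_of_dvd ha.ne' hd)
    fun _ _ _ => by positivity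

lemma dvd_of_Iq_eq_div_pow {x a c N : ℕ} (hx : x ≠ 0) (ha : 0 < a) (hc : 0 < c)
    (hN : N.Coprime (c ^ x)) (h : Iq x a = (N : ℚ) / (c : ℚ) ^ x) : c ∣ a := by
  have hcross : sigmaX x a * c ^ x = N * a ^ x := by
    rw [Iq, div_eq_div_iff (by positivity) (by positivity)] at h
    exact_mod_cast h
  have hpow : c ^ x ∣ N * a ^ x := hcross ▸ dvd_mul_left _ _
  exact (Nat.pow_dvd_pow_iff hx).mp (hN.symm.dvd_of_dvd_mul_left hpow)

lemma coprime_of_Iq_lt {x m b : ℕ} (hmb : 0 < m * b)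
    (h : ∀ q, q.Prime → q ∣ m → Iq x (m * b) < Iq x (q * m)) : m.Coprime b :=
  Nat.coprime_of_dvd fun q hq hqm hqb =>
    (h q hq hqm).not_ge (Iq_le_of_dvd x (mul_comm m q ▸ mul_dvd_mul_left m hqb) hmb)

lemma exists_eq_of_prime_dvd_prod_pow {ι : Type*} (s : Finset ι) (p k : ι → ℕ)
    (hp : ∀ i ∈ s, (p i).Prime) {q : ℕ} (hq : q.Prime) (h : q ∣ ∏ i ∈ s, p i ^ k i) :
    ∃ i ∈ s, q = p i := by
  obtain ⟨i, hi, hqi⟩ := hq.prime.exists_mem_finset_dvd h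
  exact ⟨i, hi, (Nat.prime_dvd_prime_iff_eq hq (hp i hi)).mp (hq.dvd_of_dvd_pow hqi)⟩

lemma sigmaX_add_div_eq_Iq_mul (x : ℕ) {m n : ℕ} (h : m.Coprime n) (t : ℕ) :
    ((sigmaX x (m * n) + sigmaX x m * t : ℕ) : ℚ) / ((m * n : ℕ) : ℚ) ^ x =
      Iq x m * (((sigmaX x n + t : ℕ) : ℚ) / (n : ℚ) ^ x) := by
  rw [sigmaX_mul_of_coprime x h, ← Nat.mul_add, Nat.cast_mul, Nat.cast_mul, mul_pow,
    mul_div_mul_comm, Iq]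

theorem stmt_16_general (x m n t s : ℕ) (hx : 0 < x) (hm : 0 < m) (hn : 0 < n)
    (hcopmn : Nat.gcd m n = 1)
    (p : Fin s → ℕ) (k : Fin s → ℕ)
    (hp : ∀ i, (p i).Prime)
    (hfac : m = ∏ i, p i ^ k i)
    (hlow : Nat.gcd (sigmaX x (m * n) + sigmaX x m * t) ((m * n) ^ x) = 1)
    (hgtI : ∀ i, Iq x (p i * m) >
      ((sigmaX x (m * n) + sigmaX x m * t : ℕ) : ℚ) / ((m * n : ℕ) : ℚ) ^ x)
    (a : ℕ) (ha : 0 < a)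
    (hIa : Iq x a = ((sigmaX x (m * n) + sigmaX x m * t : ℕ) : ℚ) / ((m * n : ℕ) : ℚ) ^ x) :
    ∃ b : ℕ, 0 < b ∧ Iq x b = ((sigmaX x n + t : ℕ) : ℚ) / (n : ℚ) ^ x := by
  have hmn : m * n ∣ a := dvd_of_Iq_eq_div_pow hx.ne' ha (Nat.mul_pos hm hn) hlow hIa
  obtain ⟨b, rfl⟩ := (dvd_mul_right m n).trans hmn
  have hcop : m.Coprime b := coprime_of_Iq_lt ha fun q hq hqm => by
    obtain ⟨i, -, rfl⟩ :=
      exists_eq_of_prime_dvd_prod_pow _ p k (fun i _ => hp i) hq (hfac ▸ hqm)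
    exact hIa ▸ hgtI i
  refine ⟨b, Nat.pos_of_mul_pos_left ha, mul_left_cancel₀ (Iq_pos x hm).ne' ?_⟩
  rw [← Iq_mul_of_coprime x hcop, hIa, sigmaX_add_div_eq_Iq_mul x hcopmn]

theorem stmt_16 (x m n t s : ℕ) (hx : 0 < x) (hm : 0 < m) (hn : 0 < n) (ht : 0 < t)
    (hs : 0 < s) (hcopmn : Nat.gcd m n = 1)
    (p : Fin s → ℕ) (k : Fin s → ℕ)
    (hp : ∀ i, (p i).Prime) (hinj : Function.Injective p) (hk : ∀ i, 0 < k i)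
    (hfac : m = ∏ i, p i ^ k i)
    (hlow : Nat.gcd (sigmaX x (m * n) + sigmaX x m * t) ((m * n) ^ x) = 1)
    (hgtI : ∀ i, Iq x (p i * m) >
      ((sigmaX x (m * n) + sigmaX x m * t : ℕ) : ℚ) / ((m * n : ℕ) : ℚ) ^ x)
    (a : ℕ) (ha : 0 < a)
    (hIa : Iq x a = ((sigmaX x (m * n) + sigmaX x m * t : ℕ) : ℚ) / ((m * n : ℕ) : ℚ) ^ x) :
    ∃ b : ℕ, 0 < b ∧ Iq x b = ((sigmaX x n + t : ℕ) : ℚ) / (n : ℚ) ^ x :=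
  stmt_16_general x m n t s hx hm hn hcopmn p k hp hfac hlow hgtI a ha hIa
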